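/- arXiv:2305.10737 — 3 statements merged into one kernel-verified Lean document; each statement's English description precedes it below -/
import Mathlib

section
/- Let u : [0,T] × ℝ → ℝⁿ be an entropy-admissible weak solution of u_t + f(u)_x = 0 taking values in the compact set K ⊆ Ω, where (η,q) is an entropy pair for f and η is strictly convex with constant c₀ > 0. Assume moreover that for each t ∈ [0,T] the function x ↦ u(t,x) is right-continuous and of bounded variation. Let λ̂ > 0 be a constant for which the finite-propagation estimate of Lemma 2.1 holds. Then there exists a constant C > 0, depending only on f, η, q, K and c₀, such that for every τ ∈ [0,T], every −∞ ≤ a < b ≤ +∞, and every t ∈ (τ, T] with 2λ̂(t−τ) < b − a, one has ∫_{a+λ̂(t−τ)}^{b−λ̂(t−τ)} |u(t,x) − u(τ,x)| dx ≤ C (t−τ) · Tot.Var.{u(τ,·); (a,b)}. -/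
/-!
Write `v = u(τ,·)`, `w = u(t,·)` and `δ = λ̂ (t - τ)`. On a short interval `[p, r]`
(`r - p ≤ 2δ`) compare `w` with the constant state `v (r + δ) ∈ K`: Lemma 2.1 bounds the `L²`
distance of `w` to it on `[p, r]` by that of `v` on `[p - δ, r + δ]`, which is at most `4δ V²`,
`V` being the variation of `v` on that window. AM-GM turns this into an `L¹` bound `O(δ V)` for
`w - v (r + δ)`, hence for `w - v`. Cutting `[α, β]` into pieces of length `2δ`, every point lies in
at most two of the enlarged windows, so the bounds add up to `O(δ) · Var(v; [α - δ, β + δ])`.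
Finally the possibly unbounded set `{a + δ ≤ x ≤ b - δ}` is exhausted by such intervals `[α, β]`
through inner regularity of the measure `‖w - v‖ dx`.
-/

open MeasureTheory Filter

noncomputable section

/-- A `C¹` test function with compact support contained in the open strip `(0,T) × ℝ`. -/
def IsTestFun (T : ℝ) (φ : ℝ × ℝ → ℝ) : Prop :=
  ContDiff ℝ 1 φ ∧ HasCompactSupport φ ∧
    tsupport φ ⊆ Set.Ioo 0 T ×ˢ (Set.univ : Set ℝ)

/-- `u` is a weak solution of `u_t + f(u)_x = 0` on `[0,T] × ℝ` taking values in `K`,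
with `t ↦ u(t,·)` continuous into `L¹`. -/
def IsWeakSolution (n : ℕ) (T : ℝ) (K : Set (EuclideanSpace ℝ (Fin n)))
    (f : EuclideanSpace ℝ (Fin n) → EuclideanSpace ℝ (Fin n))
    (u : ℝ → ℝ → EuclideanSpace ℝ (Fin n)) : Prop :=
  (∀ t ∈ Set.Icc (0 : ℝ) T, ∀ x : ℝ, u t x ∈ K) ∧
  (∀ t : ℝ, Measurable (u t)) ∧
  (∀ s ∈ Set.Icc (0 : ℝ) T, ∀ t ∈ Set.Icc (0 : ℝ) T,
    Integrable (fun x : ℝ => u t x - u s x)) ∧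
  (∀ t₀ ∈ Set.Icc (0 : ℝ) T,
    Tendsto (fun t : ℝ => ∫ x : ℝ, ‖u t x - u t₀ x‖)
      (nhdsWithin t₀ (Set.Icc 0 T)) (nhds 0)) ∧
  (∀ φ : ℝ × ℝ → ℝ, IsTestFun T φ →
    (∫ p : ℝ × ℝ, ((fderiv ℝ φ p (1, 0)) • u p.1 p.2
        + (fderiv ℝ φ p (0, 1)) • f (u p.1 p.2))) = 0)

/-- The entropy admissibility condition for the entropy pair `(η, q)`. -/
def IsEntropyAdmissible (n : ℕ) (T : ℝ)
    (η q : EuclideanSpace ℝ (Fin n) → ℝ)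
    (u : ℝ → ℝ → EuclideanSpace ℝ (Fin n)) : Prop :=
  ∀ φ : ℝ × ℝ → ℝ, IsTestFun T φ → (∀ p, 0 ≤ φ p) →
    0 ≤ ∫ p : ℝ × ℝ, (η (u p.1 p.2) * fderiv ℝ φ p (1, 0)
        + q (u p.1 p.2) * fderiv ℝ φ p (0, 1))

/-- At each time `t ∈ [0,T]`, the profile `x ↦ u(t,x)` is right-continuous and
of bounded variation. -/
def RightContBV (n : ℕ) (T : ℝ) (u : ℝ → ℝ → EuclideanSpace ℝ (Fin n)) : Prop :=
  ∀ t ∈ Set.Icc (0 : ℝ) T,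
    (∀ x : ℝ, ContinuousWithinAt (u t) (Set.Ici x) x) ∧
    BoundedVariationOn (u t) Set.univ

open Set

theorem setIntegral_le_of_setIntegral_sq_le {α : Type*} [MeasurableSpace α] {μ : Measure α}
    {s : Set α} (hs : μ s ≠ ⊤) {g : α → ℝ} (hg2 : IntegrableOn (fun x => g x ^ 2) s μ)
    (hg : IntegrableOn g s μ) {M V : ℝ} (hV : 0 ≤ V) (h : ∫ x in s, g x ^ 2 ∂μ ≤ M * V ^ 2) :
    ∫ x in s, g x ∂μ ≤ (M + μ.real s) / 2 * V := by
  rcases hV.eq_or_lt with rfl | hV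
  · have hsq : (fun x => g x ^ 2) =ᵐ[μ.restrict s] 0 :=
      (integral_eq_zero_iff_of_nonneg (fun x => sq_nonneg (g x)) hg2).mp
        (le_antisymm (by simpa using h) (integral_nonneg fun x => sq_nonneg (g x)))
    have hzero : g =ᵐ[μ.restrict s] 0 := hsq.mono fun x hx => pow_eq_zero_iff two_ne_zero |>.mp hx
    simp [integral_eq_zero_of_ae hzero]
  have hamgm : ∀ x, g x ≤ (2 * V)⁻¹ * g x ^ 2 + V / 2 := fun x => by
    have := two_mul_le_add_sq (g x) V
    field_simp
    linarith
  have hbound : IntegrableOn (fun x => (2 * V)⁻¹ * g x ^ 2 + V / 2) s μ :=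
    (hg2.const_mul _).add (integrableOn_const hs)
  calc ∫ x in s, g x ∂μ ≤ ∫ x in s, ((2 * V)⁻¹ * g x ^ 2 + V / 2) ∂μ :=
        setIntegral_mono hg hbound hamgm
    _ = (2 * V)⁻¹ * ∫ x in s, g x ^ 2 ∂μ + μ.real s * (V / 2) := by
        rw [integral_add (hg2.const_mul _) (integrableOn_const hs), integral_const_mul,
          setIntegral_const, smul_eq_mul]
    _ ≤ (2 * V)⁻¹ * (M * V ^ 2) + μ.real s * (V / 2) := by gcongr
    _ = (M + μ.real s) / 2 * V := by field_simp

theorem BoundedVariationOn.sum_eVariationOn_Icc_add_two_le {α E : Type*} [LinearOrder α]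
    [PseudoEMetricSpace E] {f : α → E} {z : ℕ → α} (hz : Monotone z) {m : ℕ}
    (hf : BoundedVariationOn f (Icc (z 0) (z (m + 1)))) :
    ∑ j ∈ Finset.range m, (eVariationOn f (Icc (z j) (z (j + 2)))).toReal ≤
      2 * (eVariationOn f (Icc (z 0) (z (m + 1)))).toReal := by
  set W : ℕ → ENNReal := fun j => eVariationOn f (Icc (z j) (z (j + 1)))
  have hpair : ∀ j, eVariationOn f (Icc (z j) (z (j + 2))) = W j + W (j + 1) := fun j => by
    simpa [W, Finset.sum_range_succ, add_assoc] using
      (eVariationOn.sum' f (I := fun i => z (j + i)) (fun i k hik => hz (by omega)) (n := 2)).symm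
  have hsum : ∑ j ∈ Finset.range m, eVariationOn f (Icc (z j) (z (j + 2))) ≤
      2 * eVariationOn f (Icc (z 0) (z (m + 1))) := by
    rw [← eVariationOn.sum' f hz, Finset.sum_congr rfl fun j _ => hpair j,
      Finset.sum_add_distrib, two_mul]
    refine add_le_add (Finset.sum_le_sum_of_subset (Finset.range_subset_range.mpr m.le_succ)) ?_
    rw [Finset.sum_range_succ' W m]
    exact le_self_add
  have hfin : ∀ j ∈ Finset.range m, eVariationOn f (Icc (z j) (z (j + 2))) ≠ ⊤ := fun j hj =>
    hf.mono (Icc_subset_Icc (hz (Nat.zero_le j)) (hz (by simp at hj; omega)))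
  rw [← ENNReal.toReal_sum hfin, ← ENNReal.toReal_ofNat 2, ← ENNReal.toReal_mul]
  exact ENNReal.toReal_mono (ENNReal.mul_ne_top (by simp) hf) hsum

theorem setIntegral_Icc_eq_sum_Icc {E : Type*} [NormedAddCommGroup E] [NormedSpace ℝ E]
    {g : ℝ → E} {y : ℕ → ℝ} (hy : Monotone y) {M : ℕ} (hg : IntegrableOn g (Icc (y 0) (y M))) :
    ∫ x in Icc (y 0) (y M), g x = ∑ j ∈ Finset.range M, ∫ x in Icc (y j) (y (j + 1)), g x := by
  have hint : ∀ j < M, IntervalIntegrable g volume (y j) (y (j + 1)) := fun j hj =>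
    (hg.mono_set (uIcc_subset_Icc ⟨hy (Nat.zero_le j), hy hj.le⟩
      ⟨hy (Nat.zero_le _), hy hj⟩)).intervalIntegrable
  rw [integral_Icc_eq_integral_Ioc, ← intervalIntegral.integral_of_le (hy (Nat.zero_le M)),
    ← intervalIntegral.sum_integral_adjacent_intervals hint]
  refine Finset.sum_congr rfl fun j _ => ?_
  rw [intervalIntegral.integral_of_le (hy j.le_succ), integral_Icc_eq_integral_Ioc]

theorem monotone_min_add_mul {a h b : ℝ} (hh : 0 ≤ h) : Monotone fun j : ℕ => min (a + h * j) b :=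
  fun _ _ hij => min_le_min_right _ (by gcongr)

theorem setIntegral_Icc_le_two_mul_of_window_bound {E : Type*} [PseudoEMetricSpace E]
    {v : ℝ → E} {g : ℝ → ℝ} {α β δ L : ℝ} (hg : IntegrableOn g (Icc α β)) (hδ : 0 < δ)
    (hL : 0 ≤ L) (hαβ : α ≤ β) (hv : BoundedVariationOn v (Icc (α - δ) (β + δ)))
    (hloc : ∀ p r, α ≤ p → p < r → r ≤ β → r - p ≤ 2 * δ →
      ∫ x in Icc p r, g x ≤ L * (eVariationOn v (Icc (p - δ) (r + δ))).toReal) :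
    ∫ x in Icc α β, g x ≤ 2 * L * (eVariationOn v (Icc (α - δ) (β + δ))).toReal := by
  -- Cut `[α, β]` at the points `y j`, spaced `2δ` apart; the enlarged windows
  -- `[y j - δ, y (j+1) + δ] = [z j, z (j+2)]` then cover `[α - δ, β + δ]` at most twice.
  set M := ⌈(β - α) / (2 * δ)⌉₊
  set y : ℕ → ℝ := fun j => min (α + 2 * δ * j) β
  set z : ℕ → ℝ := fun j => min (α - δ + 2 * δ * j) (β + δ)
  have hbelow : ∀ j < M, α + 2 * δ * j < β := fun j hj => by
    have := (lt_div_iff₀ (by positivity)).mp (Nat.lt_ceil.mp hj)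
    linarith
  have hyM : y M = β := min_eq_right <| by
    have := (div_le_iff₀ (by positivity)).mp (Nat.le_ceil ((β - α) / (2 * δ)))
    linarith
  have hstep : ∀ j : ℕ, 0 ≤ 2 * δ * j := fun j => by positivity
  have hyIcc : ∀ j, y j ∈ Icc α β := fun j =>
    ⟨le_min (by linarith [hstep j]) hαβ, min_le_right _ _⟩
  have hzIcc : ∀ j, z j ∈ Icc (α - δ) (β + δ) := fun j =>
    ⟨le_min (by linarith [hstep j]) (by linarith), min_le_right _ _⟩
  have hpiece : ∀ j < M, ∫ x in Icc (y j) (y (j + 1)), g x ≤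
      L * (eVariationOn v (Icc (z j) (z (j + 2)))).toReal := fun j hj => by
    have hyj : y j = α + 2 * δ * j := min_eq_left (hbelow j hj).le
    have hzj : z j = y j - δ := by
      simp only [z, hyj]; rw [min_eq_left (by linarith [hbelow j hj])]; ring
    have hzj2 : z (j + 2) = y (j + 1) + δ := by
      simp only [z, y, ← min_add_add_right]; push_cast; ring_nf
    have hlt : y j < y (j + 1) := by
      rw [hyj]; refine lt_min (by push_cast; linarith) (hbelow j hj)
    have hle : y (j + 1) - y j ≤ 2 * δ := by
      have : y (j + 1) ≤ α + 2 * δ * (j + 1 : ℕ) := min_le_left _ _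
      push_cast at this; linarith
    rw [hzj, hzj2]
    exact hloc _ _ (hyIcc j).1 hlt (hyIcc (j + 1)).2 hle
  have hy0 : y 0 = α := by simp [y, hαβ]
  have hzsub : Icc (z 0) (z (M + 1)) ⊆ Icc (α - δ) (β + δ) :=
    Icc_subset_Icc (hzIcc 0).1 (hzIcc (M + 1)).2
  calc ∫ x in Icc α β, g x
      = ∑ j ∈ Finset.range M, ∫ x in Icc (y j) (y (j + 1)), g x := by
        rw [← hy0, ← hyM] at hg ⊢
        exact setIntegral_Icc_eq_sum_Icc (monotone_min_add_mul (by positivity)) hg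
    _ ≤ ∑ j ∈ Finset.range M, L * (eVariationOn v (Icc (z j) (z (j + 2)))).toReal :=
        Finset.sum_le_sum fun j hj => hpiece j (Finset.mem_range.mp hj)
    _ ≤ L * (2 * (eVariationOn v (Icc (z 0) (z (M + 1)))).toReal) := by
        rw [← Finset.mul_sum]
        gcongr
        exact (hv.mono hzsub).sum_eVariationOn_Icc_add_two_le (z := z) (monotone_min_add_mul (by positivity))
    _ ≤ 2 * L * (eVariationOn v (Icc (α - δ) (β + δ))).toReal := by
        rw [mul_left_comm, ← mul_assoc]
        gcongr
        exact eVariationOn.mono v hzsub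

theorem setIntegral_le_of_forall_Icc_subset {g : ℝ → ℝ} (hg : Integrable g) (hg0 : 0 ≤ g)
    {s : Set ℝ} (hs : MeasurableSet s) (hsc : s.OrdConnected) {B : ℝ} (hB0 : 0 ≤ B)
    (hB : ∀ α β, α ≤ β → Icc α β ⊆ s → ∫ x in Icc α β, g x ≤ B) :
    ∫ x in s, g x ≤ B := by
  -- Inner regularity of the finite measure `g • volume` reduces `s` to a compact subset,
  -- which lies in the interval spanned by its extremities.
  set ν := volume.withDensity fun x => ENNReal.ofReal (g x)
  have : IsFiniteMeasure ν := isFiniteMeasure_withDensity_ofReal hg.2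
  have hν : ∀ t, MeasurableSet t → ν t = ENNReal.ofReal (∫ x in t, g x) := fun t ht => by
    rw [withDensity_apply _ ht,
      ofReal_integral_eq_lintegral_ofReal hg.integrableOn (ae_of_all _ fun x => hg0 x)]
  by_contra! hlt
  obtain ⟨K, hKs, hK, hBK⟩ := hs.exists_lt_isCompact (μ := ν) (r := ENNReal.ofReal B) <| by
    rw [hν s hs]; exact ENNReal.ofReal_lt_ofReal_iff'.mpr ⟨hlt, hB0.trans_lt hlt⟩
  have hKne : K.Nonempty := by
    by_contra! h
    simp [h] at hBK
  have hKsub : K ⊆ Icc (sInf K) (sSup K) := fun x hx =>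
    ⟨csInf_le hK.bddBelow hx, le_csSup hK.bddAbove hx⟩
  have hIcc := hB _ _ (csInf_le_csSup hKne hK.bddBelow hK.bddAbove)
    (hsc.out (hKs (hK.sInf_mem hKne)) (hKs (hK.sSup_mem hKne)))
  have := (measure_mono (μ := ν) hKsub).trans_eq (hν _ measurableSet_Icc)
  exact (hBK.trans_le this).not_ge (ENNReal.ofReal_le_ofReal hIcc)

theorem setIntegral_EReal_window_le {g : ℝ → ℝ} (hg : Integrable g) (hg0 : 0 ≤ g)
    {a b : EReal} {δ B : ℝ} (hB0 : 0 ≤ B)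
    (hB : ∀ α β, α ≤ β → Icc (α - δ) (β + δ) ⊆ {x : ℝ | a < x ∧ x < b} →
      ∫ x in Icc α β, g x ≤ B) :
    ∫ x in {x : ℝ | a + δ ≤ x ∧ x ≤ b - δ}, g x ≤ B := by
  set O := {x : ℝ | a + δ < x ∧ x < b - δ}
  have hOmeas : MeasurableSet O :=
    (measurableSet_lt measurable_const measurable_coe_real_ereal).inter
      (measurableSet_lt measurable_coe_real_ereal measurable_const)
  have hOconn : O.OrdConnected := ⟨fun x hx y hy z hz =>
    ⟨hx.1.trans_le (EReal.coe_le_coe_iff.mpr hz.1), (EReal.coe_le_coe_iff.mpr hz.2).trans_lt hy.2⟩⟩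
  have hSO : {x : ℝ | a + δ ≤ x ∧ x ≤ b - δ} ≤ᵐ[volume] O := by
    refine ae_le_set.mpr (measure_mono_null (t := {x : ℝ | (x : EReal) = a + δ} ∪
      {x : ℝ | (x : EReal) = b - δ}) ?_ (measure_union_null ?_ ?_))
    · rintro x ⟨⟨hax, hxb⟩, hxO⟩
      rcases hax.eq_or_lt with h | h
      · exact .inl h.symm
      rcases hxb.eq_or_lt with h' | h'
      · exact .inr h'
      exact absurd ⟨h, h'⟩ hxO
    all_goals
      exact Set.Subsingleton.measure_zero (fun x hx y hy => EReal.coe_injective (hx.trans hy.symm)) _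
  refine (setIntegral_mono_set hg.integrableOn (ae_of_all _ hg0) hSO).trans
    (setIntegral_le_of_forall_Icc_subset hg hg0 hOmeas hOconn hB0 fun α β hαβ hsub => ?_)
  refine hB α β hαβ fun x hx => ⟨?_, ?_⟩
  · have : a < ((α - δ : ℝ) : EReal) := by
      rw [EReal.coe_sub, EReal.lt_sub_iff_add_lt (.inl (EReal.coe_ne_bot _))
        (.inl (EReal.coe_ne_top _))]
      exact (hsub ⟨le_rfl, hαβ⟩).1
    exact this.trans_le (EReal.coe_le_coe_iff.mpr hx.1)
  · have : ((β + δ : ℝ) : EReal) < b := by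
      rw [EReal.coe_add, ← EReal.lt_sub_iff_add_lt (.inl (EReal.coe_ne_bot _))
        (.inl (EReal.coe_ne_top _))]
      exact (hsub ⟨hαβ, le_rfl⟩).2
    exact (EReal.coe_le_coe_iff.mpr hx.2).trans_lt this

theorem integrableOn_norm_sub_pow_of_mem {ι E : Type*} [MeasurableSpace ι] {μ : Measure ι}
    [NormedAddCommGroup E] {K : Set E} {w : ι → E} (hK : Bornology.IsBounded K) (hw : AEStronglyMeasurable w μ) (hwK : ∀ x, w x ∈ K) {e : E}
    (he : e ∈ K) {s : Set ι} (hs : μ s ≠ ⊤) (k : ℕ) :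
    IntegrableOn (fun x => ‖w x - e‖ ^ k) s μ := by
  obtain ⟨D, hD⟩ := Metric.isBounded_iff.mp hK
  refine Measure.integrableOn_of_bounded hs ((hw.sub aestronglyMeasurable_const).norm.pow k)
    (M := D ^ k) (Eventually.of_forall fun x => ?_)
  simpa [← dist_eq_norm] using pow_le_pow_left₀ dist_nonneg (hD (hwK x) he) k

theorem BoundedVariationOn.setIntegral_norm_sub_sq_le {E : Type*} [NormedAddCommGroup E]
    {v : ℝ → E} {c d y : ℝ} (hv : BoundedVariationOn v (Icc c d)) (hcd : c ≤ d)
    (hy : y ∈ Icc c d) :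
    ∫ x in Icc c d, ‖v x - v y‖ ^ 2 ≤ (eVariationOn v (Icc c d)).toReal ^ 2 * (d - c) := by
  refine (Real.le_norm_self _).trans ((norm_setIntegral_le_of_norm_le_const measure_Icc_lt_top
    fun x hx => ?_).trans_eq (by rw [Real.volume_real_Icc_of_le hcd]))
  simpa [← dist_eq_norm] using pow_le_pow_left₀ dist_nonneg (hv.dist_le hx hy) 2

/-- Lemma 2.1 between the time slices `v = u(τ,·)` and `w = u(t,·)`, with `δ = λ̂ (t - τ)`. -/
def L2FinitePropagation {E : Type*} [NormedAddCommGroup E] (K : Set E) (v w : ℝ → E)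
    (δ C : ℝ) : Prop :=
  ∀ ustar ∈ K, ∀ c d : ℝ, 2 * δ < d - c →
    ∫ x in Icc (c + δ) (d - δ), ‖w x - ustar‖ ^ 2 ≤ C * ∫ x in Icc c d, ‖v x - ustar‖ ^ 2

section Window

variable {E : Type*} [NormedAddCommGroup E] {K : Set E} {v w : ℝ → E} {δ C : ℝ}

theorem setIntegral_norm_sub_le_of_l2FinitePropagation (hK : Bornology.IsBounded K)
    (hvK : ∀ x, v x ∈ K) (hwK : ∀ x, w x ∈ K) (hw : AEStronglyMeasurable w)
    (hprop : L2FinitePropagation K v w δ C) (hC : 0 ≤ C) {p r : ℝ} (hpr : p < r)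
    (hrp : r - p ≤ 2 * δ) (hvar : BoundedVariationOn v (Icc (p - δ) (r + δ))) :
    ∫ x in Icc p r, ‖w x - v x‖ ≤
      (2 * C + 3) * δ * (eVariationOn v (Icc (p - δ) (r + δ))).toReal := by
  set V := (eVariationOn v (Icc (p - δ) (r + δ))).toReal
  set ustar := v (r + δ)
  have hV : 0 ≤ V := ENNReal.toReal_nonneg
  have hwin : r + δ ∈ Icc (p - δ) (r + δ) := ⟨by linarith, le_rfl⟩
  have hnear : ∀ x ∈ Icc (p - δ) (r + δ), ‖v x - ustar‖ ≤ V := fun x hx => by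
    simpa [dist_eq_norm] using hvar.dist_le hx hwin
  have hfin : volume (Icc p r) ≠ ⊤ := measure_Icc_lt_top.ne
  have hint2 := integrableOn_norm_sub_pow_of_mem hK hw hwK (hvK (r + δ)) hfin 2
  have hint : IntegrableOn (fun x => ‖w x - ustar‖) (Icc p r) := by
    simpa using integrableOn_norm_sub_pow_of_mem hK hw hwK (hvK (r + δ)) hfin 1
  have hsq : ∫ x in Icc p r, ‖w x - ustar‖ ^ 2 ≤ C * (r - p + 2 * δ) * V ^ 2 := by
    have := hprop ustar (hvK _) (p - δ) (r + δ) (by linarith)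
    rw [sub_add_cancel, add_sub_cancel_right] at this
    calc _ ≤ _ := this
      _ ≤ C * (V ^ 2 * (r + δ - (p - δ))) := by
        gcongr
        exact hvar.setIntegral_norm_sub_sq_le (by linarith) hwin
      _ = _ := by ring
  have hfar : ∫ x in Icc p r, ‖w x - ustar‖ ≤ (C * (r - p + 2 * δ) + (r - p)) / 2 * V := by
    simpa [Real.volume_real_Icc_of_le hpr.le] using
      setIntegral_le_of_setIntegral_sq_le hfin hint2 hint hV hsq
  calc ∫ x in Icc p r, ‖w x - v x‖ ≤ ∫ x in Icc p r, (‖w x - ustar‖ + V) := by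
        refine integral_mono_of_nonneg (Eventually.of_forall fun x => norm_nonneg _)
          (hint.add (integrableOn_const hfin)) ?_
        filter_upwards [ae_restrict_mem measurableSet_Icc] with x hx
        calc ‖w x - v x‖ ≤ ‖w x - ustar‖ + ‖v x - ustar‖ := by
              simpa [norm_sub_rev ustar] using norm_sub_le_norm_sub_add_norm_sub (w x) ustar (v x)
          _ ≤ _ := by gcongr; exact hnear x ⟨by linarith [hx.1], by linarith [hx.2]⟩
    _ = (∫ x in Icc p r, ‖w x - ustar‖) + (r - p) * V := by
        rw [integral_add hint (integrableOn_const hfin), setIntegral_const, smul_eq_mul,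
          Real.volume_real_Icc_of_le hpr.le]
    _ ≤ (2 * C + 3) * δ * V := by
        have h1 : C * (r - p) * V ≤ C * (2 * δ) * V := by gcongr
        have h2 : (r - p) * V ≤ 2 * δ * V := by gcongr
        nlinarith

theorem setIntegral_Icc_norm_sub_le_two_mul_variation (hK : Bornology.IsBounded K)
    (hvK : ∀ x, v x ∈ K) (hwK : ∀ x, w x ∈ K) (hw : AEStronglyMeasurable w)
    (hprop : L2FinitePropagation K v w δ C) (hC : 0 ≤ C) (hδ : 0 < δ) {α β : ℝ} (hαβ : α ≤ β)
    (hvar : BoundedVariationOn v (Icc (α - δ) (β + δ)))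
    (hint : IntegrableOn (fun x => ‖w x - v x‖) (Icc α β)) :
    ∫ x in Icc α β, ‖w x - v x‖ ≤
      2 * ((2 * C + 3) * δ) * (eVariationOn v (Icc (α - δ) (β + δ))).toReal :=
  setIntegral_Icc_le_two_mul_of_window_bound hint hδ (by positivity) hαβ hvar
    fun _ _ hαp hpr hrβ hrp => setIntegral_norm_sub_le_of_l2FinitePropagation hK hvK hwK hw hprop
      hC hpr hrp (hvar.mono (Icc_subset_Icc (by linarith) (by linarith)))

end Window

theorem stmt_4_general (n : ℕ)
    (K : Set (EuclideanSpace ℝ (Fin n))) (hK : IsCompact K)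
    (f : EuclideanSpace ℝ (Fin n) → EuclideanSpace ℝ (Fin n))
    (η q : EuclideanSpace ℝ (Fin n) → ℝ)
    (T : ℝ)
    (lhat : ℝ) (hlhat : 0 < lhat) (Chat : ℝ) (hChat : 0 < Chat)
    -- `λ̂` is a constant for which the finite-propagation estimate of Lemma 2.1 holds
    (hlem : ∀ u : ℝ → ℝ → EuclideanSpace ℝ (Fin n),
      IsWeakSolution n T K f u → IsEntropyAdmissible n T η q u → RightContBV n T u →
      ∀ ustar ∈ K, ∀ a b : ℝ, a < b →
      ∀ τ τ' : ℝ, 0 ≤ τ → τ < τ' → τ' ≤ T → 2 * lhat * (τ' - τ) < b - a →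
        ∫ x in Set.Icc (a + lhat * (τ' - τ)) (b - lhat * (τ' - τ)),
            ‖u τ' x - ustar‖ ^ 2
          ≤ Chat * ∫ x in Set.Icc a b, ‖u τ x - ustar‖ ^ 2) :
    ∃ C > (0 : ℝ), ∀ u : ℝ → ℝ → EuclideanSpace ℝ (Fin n),
      IsWeakSolution n T K f u → IsEntropyAdmissible n T η q u → RightContBV n T u →
      ∀ τ ∈ Set.Icc (0 : ℝ) T, ∀ a b : EReal, a < b →
      ∀ t : ℝ, τ < t → t ≤ T →
      ((2 * lhat * (t - τ) : ℝ) : EReal) < b - a →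
        ∫ x in {x : ℝ | a + ((lhat * (t - τ) : ℝ) : EReal) ≤ (x : EReal) ∧
            (x : EReal) ≤ b - ((lhat * (t - τ) : ℝ) : EReal)},
          ‖u t x - u τ x‖
          ≤ C * (t - τ) *
            (eVariationOn (u τ) {x : ℝ | a < (x : EReal) ∧ (x : EReal) < b}).toReal := by
  refine ⟨2 * (2 * Chat + 3) * lhat, by positivity, ?_⟩
  intro u hws hea hbv τ hτ a b _ t hτt htT _
  have ht : t ∈ Set.Icc 0 T := ⟨hτ.1.trans hτt.le, htT⟩
  have hδ : 0 < lhat * (t - τ) := mul_pos hlhat (sub_pos.mpr hτt)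
  have hprop : L2FinitePropagation K (u τ) (u t) (lhat * (t - τ)) Chat :=
    fun ustar hu c d hcd => hlem u hws hea hbv ustar hu c d (by linarith) τ t hτ.1 hτt htT
      (by linarith)
  have hBV : BoundedVariationOn (u τ) Set.univ := (hbv τ hτ).2
  have hint : Integrable fun x => ‖u t x - u τ x‖ := (hws.2.2.1 τ hτ t ht).norm
  refine setIntegral_EReal_window_le hint (fun x => norm_nonneg _)
    (mul_nonneg (by nlinarith) ENNReal.toReal_nonneg) fun α β hαβ hsub => ?_
  calc _ ≤ 2 * ((2 * Chat + 3) * (lhat * (t - τ))) *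
        (eVariationOn (u τ) (Set.Icc (α - lhat * (t - τ)) (β + lhat * (t - τ)))).toReal :=
        setIntegral_Icc_norm_sub_le_two_mul_variation hK.isBounded (hws.1 τ hτ) (hws.1 t ht)
          (hws.2.1 t).aestronglyMeasurable hprop hChat.le hδ hαβ (hBV.mono (Set.subset_univ _))
          hint.integrableOn
    _ ≤ _ := by
        rw [show 2 * ((2 * Chat + 3) * (lhat * (t - τ))) = 2 * (2 * Chat + 3) * lhat * (t - τ) by
          ring]
        gcongr
        · exact hBV.mono (Set.subset_univ _)
        · exact eVariationOn.mono _ hsub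

theorem stmt_4 (n : ℕ) (hn : 1 ≤ n)
    (Ω : Set (EuclideanSpace ℝ (Fin n))) (hΩ : IsOpen Ω)
    (K : Set (EuclideanSpace ℝ (Fin n))) (hK : IsCompact K) (hKΩ : K ⊆ Ω)
    (f : EuclideanSpace ℝ (Fin n) → EuclideanSpace ℝ (Fin n))
    (hf : ContDiffOn ℝ 2 f Ω)
    (η q : EuclideanSpace ℝ (Fin n) → ℝ)
    (hη : ContDiffOn ℝ 2 η Ω) (hq : ContDiffOn ℝ 2 q Ω)
    (hpair : ∀ ω ∈ Ω, ∀ v, fderiv ℝ q ω v = fderiv ℝ η ω (fderiv ℝ f ω v))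
    (c₀ : ℝ) (hc₀ : 0 < c₀)
    (hconv : ∀ ω ∈ Ω, ∀ ω' ∈ Ω,
      η ω' ≥ η ω + fderiv ℝ η ω (ω' - ω) + c₀ * ‖ω' - ω‖ ^ 2)
    (T : ℝ) (hT : 0 < T)
    (lhat : ℝ) (hlhat : 0 < lhat) (Chat : ℝ) (hChat : 0 < Chat)
    -- `λ̂` is a constant for which the finite-propagation estimate of Lemma 2.1 holds
    (hlem : ∀ u : ℝ → ℝ → EuclideanSpace ℝ (Fin n),
      IsWeakSolution n T K f u → IsEntropyAdmissible n T η q u → RightContBV n T u →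
      ∀ ustar ∈ K, ∀ a b : ℝ, a < b →
      ∀ τ τ' : ℝ, 0 ≤ τ → τ < τ' → τ' ≤ T → 2 * lhat * (τ' - τ) < b - a →
        ∫ x in Set.Icc (a + lhat * (τ' - τ)) (b - lhat * (τ' - τ)),
            ‖u τ' x - ustar‖ ^ 2
          ≤ Chat * ∫ x in Set.Icc a b, ‖u τ x - ustar‖ ^ 2) :
    ∃ C > (0 : ℝ), ∀ u : ℝ → ℝ → EuclideanSpace ℝ (Fin n),
      IsWeakSolution n T K f u → IsEntropyAdmissible n T η q u → RightContBV n T u →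
      ∀ τ ∈ Set.Icc (0 : ℝ) T, ∀ a b : EReal, a < b →
      ∀ t : ℝ, τ < t → t ≤ T →
      ((2 * lhat * (t - τ) : ℝ) : EReal) < b - a →
        ∫ x in {x : ℝ | a + ((lhat * (t - τ) : ℝ) : EReal) ≤ (x : EReal) ∧
            (x : EReal) ≤ b - ((lhat * (t - τ) : ℝ) : EReal)},
          ‖u t x - u τ x‖
          ≤ C * (t - τ) *
            (eVariationOn (u τ) {x : ℝ | a < (x : EReal) ∧ (x : EReal) < b}).toReal :=
  stmt_4_general n K hK f η q T lhat hlhat Chat hChat hlem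
end
end

section
/- Let w : ℝ → ℝⁿ be right-continuous and of bounded variation, let a ∈ ℝ, h > 0, and define the piecewise constant sampling w̄(x) := w(a + h⌊(x−a)/h⌋) for x ≥ a. Then for every b > a, one has ∫_a^b |w(x) − w̄(x)| dx ≤ h · Tot.Var.{w; [a,b)}. -/
/-
On the cell `[a + k h, a + (k + 1) h)` the error `‖w x - w (a + k h)‖` is at most the variation
of `w` over `[a + k h, x] ∩ [a, b)`, hence at most the increment over the cell of the cumulative
variation `V t = Var(w; [a, b) ∩ (-∞, t])`. Integrating, each cell contributes `h` times that
increment, and the increments telescope to `Var(w; [a, b))`.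
-/

open MeasureTheory Set

noncomputable def gridFloor (a h x : ℝ) : ℝ := a + h * ⌊(x - a) / h⌋

section GridFloor

variable {a h : ℝ}

lemma gridFloor_le (hh : 0 < h) (x : ℝ) : gridFloor a h x ≤ x := by
  have := (le_div_iff₀ hh).1 (Int.floor_le ((x - a) / h))
  unfold gridFloor
  linarith

lemma lt_gridFloor_add (hh : 0 < h) (x : ℝ) : x < gridFloor a h x + h := by
  have := (div_lt_iff₀ hh).1 (Int.lt_floor_add_one ((x - a) / h))
  unfold gridFloor
  linarith

lemma le_gridFloor (hh : 0 < h) {x : ℝ} (hx : a ≤ x) : a ≤ gridFloor a h x := by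
  have : (0 : ℝ) ≤ ⌊(x - a) / h⌋ := mod_cast Int.floor_nonneg.2 (by bound)
  unfold gridFloor
  nlinarith

lemma gridFloor_mono (hh : 0 ≤ h) : Monotone (gridFloor a h) := by
  intro x y hxy
  have : (⌊(x - a) / h⌋ : ℝ) ≤ ⌊(y - a) / h⌋ := mod_cast Int.floor_le_floor (by gcongr)
  unfold gridFloor
  gcongr

lemma gridFloor_eq_of_mem_Ico (hh : 0 < h) (k : ℤ) {x : ℝ}
    (hx : x ∈ Ico (a + k * h) (a + (k + 1) * h)) : gridFloor a h x = a + k * h := by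
  have hk : ⌊(x - a) / h⌋ = k := by
    rw [Int.floor_eq_iff, le_div_iff₀ hh, div_lt_iff₀ hh]
    constructor <;> linarith [hx.1, hx.2]
  rw [gridFloor, hk, mul_comm]

end GridFloor

section GridIncrement

variable {F : ℝ → ℝ} {a h : ℝ}

lemma Monotone.integrableOn_Ico_gridFloor_increment (hF : Monotone F) (hh : 0 ≤ h) (c d : ℝ) :
    IntegrableOn (fun x => F (gridFloor a h x + h) - F (gridFloor a h x)) (Ico c d) := by
  have hg : Monotone (gridFloor a h) := gridFloor_mono hh
  have hloc : LocallyIntegrable (fun x => F (gridFloor a h x + h) - F (gridFloor a h x)) :=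
    (hF.comp fun x y hxy => add_le_add_left (hg hxy) h).locallyIntegrable.sub
      (hF.comp hg).locallyIntegrable
  exact (hloc.integrableOn_isCompact isCompact_Icc).mono_set Ico_subset_Icc_self

lemma integral_Ico_gridFloor_increment_cell (hh : 0 < h) (k : ℕ) :
    ∫ x in Ico (a + k * h) (a + (k + 1) * h), (F (gridFloor a h x + h) - F (gridFloor a h x))
      = h * (F (a + (k + 1) * h) - F (a + k * h)) := by
  have hconst : EqOn (fun x => F (gridFloor a h x + h) - F (gridFloor a h x))
      (fun _ => F (a + (k + 1) * h) - F (a + k * h)) (Ico (a + k * h) (a + (k + 1) * h)) := by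
    intro x hx
    simp only [gridFloor_eq_of_mem_Ico hh k (by exact_mod_cast hx), Int.cast_natCast]
    ring_nf
  rw [setIntegral_congr_fun measurableSet_Ico hconst, setIntegral_const, measureReal_def,
    Real.volume_Ico, ENNReal.toReal_ofReal (by nlinarith), smul_eq_mul]
  ring

theorem Monotone.integral_Ico_gridFloor_increment (hF : Monotone F) (hh : 0 < h) (N : ℕ) :
    ∫ x in Ico a (a + N * h), (F (gridFloor a h x + h) - F (gridFloor a h x))
      = h * (F (a + N * h) - F a) := by
  induction N with
  | zero => simp
  | succ N ih =>
    have hint := hF.integrableOn_Ico_gridFloor_increment (a := a) hh.le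
    have hN : a ≤ a + N * h := by nlinarith [N.cast_nonneg (α := ℝ)]
    push_cast
    rw [← Ico_union_Ico_eq_Ico hN (by nlinarith), setIntegral_union Ico_disjoint_Ico_same
      measurableSet_Ico (hint _ _) (hint _ _), ih, integral_Ico_gridFloor_increment_cell hh]
    ring

end GridIncrement

section CumulativeVariation

variable {E : Type*} [PseudoMetricSpace E] {f : ℝ → E} {s : Set ℝ}

noncomputable def cumulativeVariation (f : ℝ → E) (s : Set ℝ) (t : ℝ) : ℝ :=
  (eVariationOn f (s ∩ Iic t)).toReal

lemma BoundedVariationOn.monotone_cumulativeVariation (hf : BoundedVariationOn f s) :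
    Monotone (cumulativeVariation f s) := fun _ _ hxy =>
  ENNReal.toReal_mono (hf.mono inter_subset_left)
    (eVariationOn.mono f (inter_subset_inter_right s (Iic_subset_Iic.2 hxy)))

lemma cumulativeVariation_of_subset_Iic {t : ℝ} (hs : s ⊆ Iic t) :
    cumulativeVariation f s t = (eVariationOn f s).toReal := by
  rw [cumulativeVariation, inter_eq_left.2 hs]

lemma cumulativeVariation_of_subset_Ici {t : ℝ} (hs : s ⊆ Ici t) :
    cumulativeVariation f s t = 0 := by
  rw [cumulativeVariation, eVariationOn.subsingleton f, ENNReal.toReal_zero]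
  exact subsingleton_singleton.anti fun y hy => le_antisymm hy.2 (hs hy.1)

lemma BoundedVariationOn.dist_le_cumulativeVariation_sub (hf : BoundedVariationOn f s) {x y : ℝ}
    (hx : x ∈ s) (hy : y ∈ s) (hxy : x ≤ y) :
    dist (f x) (f y) ≤ cumulativeVariation f s y - cumulativeVariation f s x := by
  have hunion : s ∩ Iic y = (s ∩ Iic x) ∪ (s ∩ Icc x y) := by
    rw [← inter_union_distrib_left, Iic_union_Icc_eq_Iic hxy]
  have hsplit := eVariationOn.union f (s := s ∩ Iic x) (t := s ∩ Icc x y)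
    ⟨⟨hx, self_mem_Iic⟩, fun _ hz => hz.2⟩
    ⟨⟨hx, left_mem_Icc.2 hxy⟩, fun _ hz => hz.2.1⟩
  rw [cumulativeVariation, cumulativeVariation, hunion, hsplit,
    ENNReal.toReal_add (hf.mono inter_subset_left) (hf.mono inter_subset_left),
    add_sub_cancel_left, dist_edist]
  exact ENNReal.toReal_mono (hf.mono inter_subset_left)
    (eVariationOn.edist_le f ⟨hx, le_rfl, hxy⟩ ⟨hy, hxy, le_rfl⟩)

end CumulativeVariation

theorem BoundedVariationOn.integral_norm_sub_gridFloor_le {E : Type*} [SeminormedAddCommGroup E]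
    {f : ℝ → E} {a b h : ℝ} (hf : BoundedVariationOn f (Ico a b)) (hh : 0 < h) :
    ∫ x in Ioc a b, ‖f x - f (gridFloor a h x)‖
      ≤ h * (eVariationOn f (Ico a b)).toReal := by
  set V := cumulativeVariation f (Ico a b)
  set G := fun x => V (gridFloor a h x + h) - V (gridFloor a h x)
  have hV : Monotone V := hf.monotone_cumulativeVariation
  obtain ⟨N, hN⟩ := exists_nat_gt ((b - a) / h)
  have hbN : b < a + N * h := by linarith [(div_lt_iff₀ hh).1 hN]
  have hsub : Ioo a b ⊆ Ico a (a + N * h) :=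
    Ioo_subset_Ico_self.trans (Ico_subset_Ico_right hbN.le)
  have hGint : IntegrableOn G (Ico a (a + N * h)) :=
    hV.integrableOn_Ico_gridFloor_increment hh.le _ _
  have hGnonneg : ∀ x, 0 ≤ G x := fun x => sub_nonneg.2 (hV (by linarith))
  have herr : ∀ x ∈ Ioo a b, ‖f x - f (gridFloor a h x)‖ ≤ G x := by
    intro x hx
    have hgx := gridFloor_le hh (a := a) x
    rw [← dist_eq_norm, dist_comm]
    calc dist (f (gridFloor a h x)) (f x) ≤ V x - V (gridFloor a h x) :=
          hf.dist_le_cumulativeVariation_sub ⟨le_gridFloor hh hx.1.le, hgx.trans_lt hx.2⟩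
            (Ioo_subset_Ico_self hx) hgx
      _ ≤ G x := by linarith [hV (lt_gridFloor_add hh (a := a) x).le]
  calc ∫ x in Ioc a b, ‖f x - f (gridFloor a h x)‖
      = ∫ x in Ioo a b, ‖f x - f (gridFloor a h x)‖ := integral_Ioc_eq_integral_Ioo
    _ ≤ ∫ x in Ioo a b, G x :=
        integral_mono_of_nonneg (.of_forall fun _ => norm_nonneg _)
          (hGint.mono_set hsub)
          ((ae_restrict_iff' measurableSet_Ioo).2 (.of_forall herr))
    _ ≤ ∫ x in Ico a (a + N * h), G x :=
        setIntegral_mono_set hGint (.of_forall hGnonneg) hsub.eventuallyLE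
    _ = h * (V (a + N * h) - V a) := hV.integral_Ico_gridFloor_increment hh N
    _ = h * (eVariationOn f (Ico a b)).toReal := by
        have hVa : V a = 0 := cumulativeVariation_of_subset_Ici fun _ hx => hx.1
        have hVN : V (a + N * h) = (eVariationOn f (Ico a b)).toReal :=
          cumulativeVariation_of_subset_Iic fun _ hx => (hx.2.trans hbN).le
        rw [hVN, hVa, sub_zero]

theorem stmt_5_general (n : ℕ)
    (w : ℝ → EuclideanSpace ℝ (Fin n))
    (hBV : BoundedVariationOn w Set.univ)
    (a h : ℝ) (hh : 0 < h)
    -- the piecewise constant sampling of `w` on the grid `a + hℤ`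
    (wbar : ℝ → EuclideanSpace ℝ (Fin n))
    (hwbar : ∀ x : ℝ, a ≤ x → wbar x = w (a + h * (⌊(x - a) / h⌋ : ℤ))) :
    ∀ b : ℝ, a < b →
      ∫ x in Set.Ioc a b, ‖w x - wbar x‖
        ≤ h * (eVariationOn w (Set.Ico a b)).toReal := by
  intro b _
  calc ∫ x in Ioc a b, ‖w x - wbar x‖ = ∫ x in Ioc a b, ‖w x - w (gridFloor a h x)‖ :=
        setIntegral_congr_fun measurableSet_Ioc fun x hx => by rw [hwbar x hx.1.le, gridFloor]
    _ ≤ h * (eVariationOn w (Ico a b)).toReal :=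
        (hBV.mono (subset_univ _)).integral_norm_sub_gridFloor_le hh

theorem stmt_5 (n : ℕ) (hn : 1 ≤ n)
    (w : ℝ → EuclideanSpace ℝ (Fin n))
    (hrc : ∀ x : ℝ, ContinuousWithinAt w (Set.Ici x) x)
    (hBV : BoundedVariationOn w Set.univ)
    (a h : ℝ) (hh : 0 < h)
    -- the piecewise constant sampling of `w` on the grid `a + hℤ`
    (wbar : ℝ → EuclideanSpace ℝ (Fin n))
    (hwbar : ∀ x : ℝ, a ≤ x → wbar x = w (a + h * (⌊(x - a) / h⌋ : ℤ))) :
    ∀ b : ℝ, a < b →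
      ∫ x in Set.Ioc a b, ‖w x - wbar x‖
        ≤ h * (eVariationOn w (Set.Ico a b)).toReal :=
  stmt_5_general n w hBV a h hh wbar hwbar
end

section
/- Let f : Ω → ℝⁿ be continuous, let u⁻, u⁺ ∈ Ω, λ ∈ ℝ, and define U : ℝ × ℝ → ℝⁿ by U(t,x) = u⁻ if x < λt and U(t,x) = u⁺ if x > λt. Then U is a distributional solution of U_t + f(U)_x = 0 on ℝ × ℝ (i.e. ∬ (U·φ_t + f(U)·φ_x) dx dt = 0 for every C¹ function φ with compact support in ℝ²) if and only if the Rankine–Hugoniot condition f(u⁺) − f(u⁻) = λ(u⁺ − u⁻) holds. -/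
/-!
Off the null line `x = λt`, `U` is `u⁻` on the half-plane `H = {x < λt}` and `u⁺` elsewhere,
and `∂ₜφ`, `∂ₓφ` integrate to zero over the whole plane, so the weak form only sees
`∫_H ∂ₜφ` and `∫_H ∂ₓφ`. Integrating `∂ₓφ` over the vertical slices of `H` gives
`∫ φ(t, λt) dt`. The shear `(t, y) ↦ (t, y + λt)` preserves area, maps `{y < 0}` onto `H` and
turns `∂ₜ + λ∂ₓ` into `∂ₜ`, whose integral over the horizontal slices vanishes; hence
`∫_H ∂ₜφ = -λ ∫ φ(t, λt) dt`. The weak form is therefore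
`(∫ φ(t, λt) dt) • (f(u⁻) - f(u⁺) - λ(u⁻ - u⁺))`, and a test function with
`∫ φ(t, λt) dt ≠ 0` gives the converse.
-/

open MeasureTheory Set

noncomputable section

section FDeriv

variable {E : Type*} [NormedAddCommGroup E] [NormedSpace ℝ E] [MeasurableSpace E] [BorelSpace E]
  {φ : E → ℝ}

theorem ContDiff.integrable_fderiv_apply (μ : Measure E) [IsFiniteMeasureOnCompacts μ]
    (hφ : ContDiff ℝ 1 φ) (hφs : HasCompactSupport φ) (v : E) :
    Integrable (fun x => fderiv ℝ φ x v) μ :=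
  ((hφ.continuous_fderiv one_ne_zero).clm_apply continuous_const).integrable_of_hasCompactSupport
    (hφs.fderiv_apply ℝ v)

theorem integral_fderiv_apply_eq_zero [FiniteDimensional ℝ E] (μ : Measure E) [μ.IsAddHaarMeasure]
    (hφ : ContDiff ℝ 1 φ) (hφs : HasCompactSupport φ) (v : E) :
    ∫ x, fderiv ℝ φ x v ∂μ = 0 := by
  have hφd := hφ.differentiable one_ne_zero
  simpa using integral_mul_fderiv_eq_neg_fderiv_mul_of_integrable (μ := μ)
    (f := fun _ => (1 : ℝ)) (g := φ) (v := v) (by simp)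
    (by simpa using hφ.integrable_fderiv_apply μ hφs v)
    (by simpa using hφ.continuous.integrable_of_hasCompactSupport hφs)
    (fun x _ => differentiableAt_const _) (fun x _ => hφd x)

end FDeriv

section Slices

variable {X Y M : Type*} [TopologicalSpace X] [TopologicalSpace Y] [Zero M] {φ : X × Y → M}

theorem HasCompactSupport.comp_prodMk_left [T1Space Y] (hφ : HasCompactSupport φ) (y : Y) :
    HasCompactSupport fun x => φ (x, y) :=
  hφ.comp_isClosedEmbedding ⟨isEmbedding_prodMkLeft y, by
    simpa [prod_singleton, image_univ] using isClosed_univ.prod isClosed_singleton⟩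

theorem HasCompactSupport.comp_prodMk_right [T1Space X] (hφ : HasCompactSupport φ) (x : X) :
    HasCompactSupport fun y => φ (x, y) :=
  hφ.comp_isClosedEmbedding ⟨isEmbedding_prodMkRight x, by
    simpa [singleton_prod, image_univ] using isClosed_singleton.prod isClosed_univ⟩

end Slices

section Plane

variable {φ : ℝ × ℝ → ℝ}

theorem hasDerivAt_fst_slice (hφ : Differentiable ℝ φ) (t y : ℝ) :
    HasDerivAt (fun s => φ (s, y)) (fderiv ℝ φ (t, y) (1, 0)) t :=
  (hφ _).hasFDerivAt.comp_hasDerivAt t ((hasDerivAt_id t).prodMk (hasDerivAt_const t y))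

theorem hasDerivAt_snd_slice (hφ : Differentiable ℝ φ) (t y : ℝ) :
    HasDerivAt (fun z => φ (t, z)) (fderiv ℝ φ (t, y) (0, 1)) y :=
  (hφ _).hasFDerivAt.comp_hasDerivAt y ((hasDerivAt_const y t).prodMk (hasDerivAt_id y))

theorem setIntegral_preimage_snd_fderiv_apply_fst (hφ : ContDiff ℝ 1 φ) (hφs : HasCompactSupport φ)
    {s : Set ℝ} (hs : MeasurableSet s) :
    ∫ p in Prod.snd ⁻¹' s, fderiv ℝ φ p (1, 0) = 0 := by
  have hslice (y : ℝ) : ∫ t, fderiv ℝ φ (t, y) (1, 0) = 0 := by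
    simp_rw [← (hasDerivAt_fst_slice (hφ.differentiable one_ne_zero) _ y).deriv,
      ← fderiv_apply_one_eq_deriv]
    exact integral_fderiv_apply_eq_zero volume (hφ.comp (contDiff_id.prodMk contDiff_const))
      (hφs.comp_prodMk_left y) 1
  rw [← integral_indicator (measurable_snd hs), Measure.volume_eq_prod,
    integral_prod_symm _ ((hφ.integrable_fderiv_apply _ hφs _).indicator (measurable_snd hs))]
  refine integral_eq_zero_of_ae (ae_of_all _ fun y => ?_)
  by_cases hy : y ∈ s
  · simpa [indicator, hy] using hslice y
  · simp [indicator, hy]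

theorem setIntegral_lt_graph_fderiv_apply_snd (hφ : ContDiff ℝ 1 φ) (hφs : HasCompactSupport φ)
    {g : ℝ → ℝ} (hg : Measurable g) :
    ∫ p in {p : ℝ × ℝ | p.2 < g p.1}, fderiv ℝ φ p (0, 1) = ∫ t, φ (t, g t) := by
  have hH : MeasurableSet {p : ℝ × ℝ | p.2 < g p.1} :=
    measurableSet_lt measurable_snd (hg.comp measurable_fst)
  have hslice (t : ℝ) : ∫ x in Iio (g t), fderiv ℝ φ (t, x) (0, 1) = φ (t, g t) := by
    simp_rw [← (hasDerivAt_snd_slice (hφ.differentiable one_ne_zero) t _).deriv,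
      ← integral_Iic_eq_integral_Iio]
    exact (hφs.comp_prodMk_right t).integral_Iic_deriv_eq
      (hφ.comp (contDiff_const.prodMk contDiff_id)) (g t)
  rw [← integral_indicator hH, Measure.volume_eq_prod,
    integral_prod _ ((hφ.integrable_fderiv_apply _ hφs _).indicator hH)]
  congr 1 with t
  rw [← hslice t, ← integral_indicator measurableSet_Iio]
  rfl

def shear (c : ℝ) : (ℝ × ℝ) ≃L[ℝ] ℝ × ℝ :=
  (ContinuousLinearEquiv.refl ℝ ℝ).skewProd (.refl ℝ ℝ) (c • ContinuousLinearMap.id ℝ ℝ)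

theorem shear_apply (c : ℝ) (p : ℝ × ℝ) : shear c p = (p.1, p.2 + c * p.1) := rfl

theorem measurePreserving_shear (c : ℝ) : MeasurePreserving (shear c) := by
  have h := (MeasurePreserving.id (volume : Measure ℝ)).skew_product (μc := volume) (μd := volume)
    (g := fun t y => y + c * t) (by fun_prop)
    (ae_of_all _ fun t => (measurePreserving_add_right volume (c * t)).map_eq)
  rw [← Measure.volume_eq_prod] at h
  exact h

theorem setIntegral_lt_linear_fderiv_apply_fst (hφ : ContDiff ℝ 1 φ) (hφs : HasCompactSupport φ)
    (c : ℝ) :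
    ∫ p in {p : ℝ × ℝ | p.2 < c * p.1}, fderiv ℝ φ p (1, 0) = -c * ∫ t, φ (t, c * t) := by
  have hpre : shear c ⁻¹' {p | p.2 < c * p.1} = Prod.snd ⁻¹' Iio 0 := by
    ext q; simp [shear_apply]
  have htransport : ∫ p in {p : ℝ × ℝ | p.2 < c * p.1}, fderiv ℝ φ p (1, c) = 0 := by
    have hfd (q : ℝ × ℝ) : fderiv ℝ φ (shear c q) (1, c) = fderiv ℝ (φ ∘ shear c) q (1, 0) := by
      simp [(shear c).comp_right_fderiv, shear_apply]
    rw [← (measurePreserving_shear c).setIntegral_preimage_emb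
      (shear c).toHomeomorph.measurableEmbedding, hpre]
    simp_rw [hfd]
    exact setIntegral_preimage_snd_fderiv_apply_fst (hφ.comp (shear c).contDiff)
      (hφs.comp_homeomorph (shear c).toHomeomorph) measurableSet_Iio
  have hsplit (p : ℝ × ℝ) :
      fderiv ℝ φ p (1, c) = fderiv ℝ φ p (1, 0) + c * fderiv ℝ φ p (0, 1) := by
    rw [← smul_eq_mul, ← map_smul, ← map_add]; simp
  simp_rw [hsplit] at htransport
  rw [integral_add (hφ.integrable_fderiv_apply _ hφs _).integrableOn
    ((hφ.integrable_fderiv_apply _ hφs _).integrableOn.const_mul c), integral_const_mul,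
    setIntegral_lt_graph_fderiv_apply_snd hφ hφs (measurable_const_mul c)] at htransport
  linarith

theorem exists_integral_line_ne_zero (c : ℝ) :
    ∃ φ : ℝ × ℝ → ℝ, ContDiff ℝ 1 φ ∧ HasCompactSupport φ ∧ ∫ t, φ (t, c * t) ≠ 0 := by
  let η : ContDiffBump (0 : ℝ) := ⟨1, 2, one_pos, one_lt_two⟩
  let ψ : ℝ × ℝ → ℝ := fun q => η q.1 * η q.2
  have hψs : HasCompactSupport ψ := by
    refine .intro (η.hasCompactSupport.isCompact.prod η.hasCompactSupport.isCompact) fun q hq => ?_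
    rcases not_and_or.mp hq with h | h <;> simp [ψ, image_eq_zero_of_notMem_tsupport h]
  have hline (t : ℝ) : (ψ ∘ (shear c).symm) (t, c * t) = η t := by
    simp [ψ, ContinuousLinearEquiv.skewProd_symm_apply, shear,
      η.one_of_mem_closedBall (Metric.mem_closedBall_self zero_le_one)]
  refine ⟨ψ ∘ (shear c).symm, ?_, hψs.comp_homeomorph (shear c).symm.toHomeomorph, ?_⟩
  · exact ((η.contDiff.comp contDiff_fst).mul (η.contDiff.comp contDiff_snd)).comp
      (shear c).symm.contDiff
  · simp_rw [hline]
    exact η.integral_pos.ne'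

end Plane

theorem volume_graph_eq_zero {g : ℝ → ℝ} (hg : Measurable g) :
    volume {p : ℝ × ℝ | p.2 = g p.1} = 0 := by
  have hm : MeasurableSet {p : ℝ × ℝ | p.2 = g p.1} :=
    measurableSet_eq_fun measurable_snd (hg.comp measurable_fst)
  rw [Measure.volume_eq_prod, Measure.prod_apply hm]
  simp [preimage]

section Jump

variable {E : Type*}

def jump (c : ℝ) (w₀ w₁ : E) (p : ℝ × ℝ) : E :=
  if p.2 < c * p.1 then w₀ else w₁

theorem ae_eq_jump {c : ℝ} {w₀ w₁ : E} {U : ℝ × ℝ → E}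
    (h₀ : ∀ t x : ℝ, x < c * t → U (t, x) = w₀) (h₁ : ∀ t x : ℝ, c * t < x → U (t, x) = w₁) :
    U =ᵐ[volume] jump c w₀ w₁ := by
  have hline : ∀ᵐ p : ℝ × ℝ, p.2 ≠ c * p.1 :=
    measure_eq_zero_iff_ae_notMem.mp (volume_graph_eq_zero (measurable_const_mul c))
  filter_upwards [hline] with ⟨t, x⟩ hp
  rcases hp.lt_or_gt with h | h
  · simp [jump, h, h₀ t x h]
  · simp [jump, h.not_gt, h₁ t x h]

variable [NormedAddCommGroup E] [NormedSpace ℝ E]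

theorem smul_jump_eq_add_indicator (c : ℝ) (w₀ w₁ : E) (F : ℝ × ℝ → ℝ) :
    (fun p => F p • jump c w₀ w₁ p) =
      fun p => F p • w₁ + {p : ℝ × ℝ | p.2 < c * p.1}.indicator F p • (w₀ - w₁) := by
  ext p
  by_cases hp : p.2 < c * p.1 <;> simp [jump, hp, smul_sub]

theorem MeasureTheory.Integrable.smul_jump {F : ℝ × ℝ → ℝ} (hF : Integrable F) (c : ℝ) (w₀ w₁ : E) :
    Integrable fun p => F p • jump c w₀ w₁ p := by
  rw [smul_jump_eq_add_indicator]
  exact (hF.smul_const _).add ((hF.indicator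
    (measurableSet_lt measurable_snd (measurable_fst.const_mul c))).smul_const _)

variable [CompleteSpace E]

theorem integral_smul_jump {F : ℝ × ℝ → ℝ} (hF : Integrable F) (c : ℝ) (w₀ w₁ : E) :
    ∫ p, F p • jump c w₀ w₁ p =
      (∫ p, F p) • w₁ + (∫ p in {p : ℝ × ℝ | p.2 < c * p.1}, F p) • (w₀ - w₁) := by
  have hH : MeasurableSet {p : ℝ × ℝ | p.2 < c * p.1} :=
    measurableSet_lt measurable_snd (measurable_fst.const_mul c)
  rw [smul_jump_eq_add_indicator, integral_add (hF.smul_const _) ((hF.indicator hH).smul_const _),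
    integral_smul_const, integral_smul_const, integral_indicator hH]

theorem integral_fderiv_smul_jump_add {φ : ℝ × ℝ → ℝ} (hφ : ContDiff ℝ 1 φ)
    (hφs : HasCompactSupport φ) (c : ℝ) (a b d e : E) :
    ∫ p, (fderiv ℝ φ p (1, 0) • jump c a b p + fderiv ℝ φ p (0, 1) • jump c d e p) =
      (∫ t, φ (t, c * t)) • ((d - e) - c • (a - b)) := by
  have hi := hφ.integrable_fderiv_apply volume hφs
  rw [integral_add ((hi _).smul_jump c a b) ((hi _).smul_jump c d e),
    integral_smul_jump (hi _), integral_smul_jump (hi _),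
    integral_fderiv_apply_eq_zero volume hφ hφs, integral_fderiv_apply_eq_zero volume hφ hφs,
    setIntegral_lt_linear_fderiv_apply_fst hφ hφs,
    setIntegral_lt_graph_fderiv_apply_snd hφ hφs (measurable_const_mul c)]
  module

end Jump

theorem stmt_9_general (n : ℕ)
    (f : EuclideanSpace ℝ (Fin n) → EuclideanSpace ℝ (Fin n))
    (um up : EuclideanSpace ℝ (Fin n))
    (lam : ℝ)
    (U : ℝ × ℝ → EuclideanSpace ℝ (Fin n))
    (hUm : ∀ t x : ℝ, x < lam * t → U (t, x) = um)
    (hUp : ∀ t x : ℝ, lam * t < x → U (t, x) = up) :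
    (∀ φ : ℝ × ℝ → ℝ, ContDiff ℝ 1 φ → HasCompactSupport φ →
      (∫ p : ℝ × ℝ, ((fderiv ℝ φ p (1, 0)) • U p
          + (fderiv ℝ φ p (0, 1)) • f (U p))) = 0)
    ↔ f up - f um = lam • (up - um) := by
  have hweak (φ : ℝ × ℝ → ℝ) (hφ : ContDiff ℝ 1 φ) (hφs : HasCompactSupport φ) :
      ∫ p, (fderiv ℝ φ p (1, 0) • U p + fderiv ℝ φ p (0, 1) • f (U p)) =
        (∫ t, φ (t, lam * t)) • ((f um - f up) - lam • (um - up)) := by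
    have hfU : f ∘ U =ᵐ[volume] jump lam (f um) (f up) :=
      ae_eq_jump (fun t x h => by simp [hUm t x h]) (fun t x h => by simp [hUp t x h])
    rw [← integral_fderiv_smul_jump_add hφ hφs]
    refine integral_congr_ae ?_
    filter_upwards [ae_eq_jump hUm hUp, hfU] with p hU hfU
    simp only [hU, ← hfU, Function.comp_apply]
  have hRH : (f um - f up) - lam • (um - up) = 0 ↔ f up - f um = lam • (up - um) := by
    rw [sub_eq_zero, ← neg_sub (f up), ← neg_sub up, smul_neg, neg_inj]
  rw [← hRH]
  constructor
  · intro H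
    obtain ⟨φ, hφ, hφs, hI⟩ := exists_integral_line_ne_zero lam
    have h := H φ hφ hφs
    rw [hweak φ hφ hφs, smul_eq_zero] at h
    exact h.resolve_left hI
  · intro h φ hφ hφs
    rw [hweak φ hφ hφs, h, smul_zero]

theorem stmt_9 (n : ℕ) (hn : 1 ≤ n)
    (Ω : Set (EuclideanSpace ℝ (Fin n)))
    (f : EuclideanSpace ℝ (Fin n) → EuclideanSpace ℝ (Fin n))
    (hf : ContinuousOn f Ω)
    (um up : EuclideanSpace ℝ (Fin n)) (hum : um ∈ Ω) (hup : up ∈ Ω)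
    (lam : ℝ)
    (U : ℝ × ℝ → EuclideanSpace ℝ (Fin n))
    (hUm : ∀ t x : ℝ, x < lam * t → U (t, x) = um)
    (hUp : ∀ t x : ℝ, lam * t < x → U (t, x) = up) :
    (∀ φ : ℝ × ℝ → ℝ, ContDiff ℝ 1 φ → HasCompactSupport φ →
      (∫ p : ℝ × ℝ, ((fderiv ℝ φ p (1, 0)) • U p
          + (fderiv ℝ φ p (0, 1)) • f (U p))) = 0)
    ↔ f up - f um = lam • (up - um) :=
  stmt_9_general n f um up lam U hUm hUp
end
end
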